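/- Let n be a positive integer. Then every balanced rooted binary phylogenetic tree on 2^(n−1) leaves embeds 2^(⌊n − log₂ n − 1⌋) label-disjoint n-caterpillars. -/

import Mathlib

/-!
Rooted binary phylogenetic trees, restrictions, agreement subtrees, and
maximum agreement subtrees (MASTs), following Martin–Thatte style definitions.
-/

namespace PhyloMAST

/-- A rooted binary tree with leaves labelled by `α`. -/
inductive PTree (α : Type) : Type
  | leaf : α → PTree α
  | node : PTree α → PTree α → PTree α

namespace PTree

variable {α β : Type}

/-- The list of leaf labels, read left to right. -/
def leafList : PTree α → List α
  | leaf x => [x]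
  | node l r => leafList l ++ leafList r

/-- The set of leaf labels. -/
def leaves [DecidableEq α] (t : PTree α) : Finset α := t.leafList.toFinset

/-- The height: number of edges on a longest root-to-leaf path. -/
def height : PTree α → ℕ
  | leaf _ => 0
  | node l r => max (height l) (height r) + 1

/-- `t` is a genuine phylogenetic tree: its leaf labels are pairwise distinct. -/
def Phylo (t : PTree α) : Prop := t.leafList.Nodup

/-- `t` is balanced: its number of leaves is `2 ^ height`. -/
def Balanced (t : PTree α) : Prop := t.leafList.length = 2 ^ t.height

/-- The restriction `t|Y`: the minimal subtree connecting the leaves in `Y`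
with all non-root degree-two vertices suppressed; `none` if no leaf of `t`
lies in `Y`. -/
def restrict [DecidableEq α] : PTree α → Finset α → Option (PTree α)
  | leaf x, Y => if x ∈ Y then some (leaf x) else none
  | node l r, Y =>
    match restrict l Y, restrict r Y with
    | some l', some r' => some (node l' r')
    | some l', none => some l'
    | none, some r' => some r'
    | none, none => none

/-- Isomorphism of leaf-labelled rooted binary trees (children are unordered). -/
inductive Iso : PTree α → PTree α → Prop
  | leaf (x : α) : Iso (leaf x) (leaf x)
  | node {a b c d : PTree α} : Iso a c → Iso b d → Iso (node a b) (node c d)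
  | swap {a b c d : PTree α} : Iso a d → Iso b c → Iso (node a b) (node c d)

/-- `Agree S T Y`: the set `Y` induces an agreement subtree of `S` and `T`. -/
def Agree [DecidableEq α] (S T : PTree α) (Y : Finset α) : Prop :=
  Y ⊆ S.leaves ∩ T.leaves ∧
    ∃ S' T', S.restrict Y = some S' ∧ T.restrict Y = some T' ∧ Iso S' T'

/-- `mast S T`: the maximum size of an agreement subtree of `S` and `T`. -/
noncomputable def mast [DecidableEq α] (S T : PTree α) : ℕ :=
  sSup {k | ∃ Y : Finset α, Agree S T Y ∧ Y.card = k}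

/-- The caterpillar tree `(l₁, l₂, …, lₙ)` built from a (nonempty) list:
`l₁` and `l₂` share a parent, and each later leaf hangs off the path to the
root, which is adjacent to the last leaf. -/
def catList [Inhabited α] : List α → PTree α
  | [] => leaf default
  | x :: xs => xs.foldl (fun t y => node t (leaf y)) (leaf x)

/-- `T` embeds the phylogenetic tree `T'`: the label set of `T'` is contained
in that of `T`, and the restriction of `T` to it is isomorphic to `T'`. -/
def Embeds [DecidableEq α] (T T' : PTree α) : Prop :=
  T'.leaves ⊆ T.leaves ∧ ∃ R, T.restrict T'.leaves = some R ∧ Iso R T'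

/-- `Subtree s t`: `s` is a (pendant) subtree of `t` (possibly `t` itself). -/
inductive Subtree : PTree α → PTree α → Prop
  | refl (t : PTree α) : Subtree t t
  | left {s l r : PTree α} : Subtree s l → Subtree s (node l r)
  | right {s l r : PTree α} : Subtree s r → Subtree s (node l r)

/-- The pendant subtrees rooted at depth `k`, read left to right. -/
def subtreesAt : ℕ → PTree α → List (PTree α)
  | 0, t => [t]
  | _ + 1, leaf x => [leaf x]
  | k + 1, node l r => subtreesAt k l ++ subtreesAt k r

/-- Two trees have the same unlabelled shape (a labelling of the second
yields the first). -/
inductive SameShape : PTree α → PTree β → Prop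
  | leaf (x : α) (y : β) : SameShape (leaf x) (leaf y)
  | node {a b : PTree α} {c d : PTree β} :
      SameShape a c → SameShape b d → SameShape (node a b) (node c d)

end PTree

end PhyloMAST

/-!
An `(h + 1)`-caterpillar in a tree of height `h` runs down a longest path: it is an
`h`-caterpillar in one child subtree followed by any leaf of the other child. Suppose each child
of a balanced tree of height `h + 1` carries `2 ^ m` label-disjoint `(h + 1)`-caterpillars. They
use `2 ^ m * (h + 1)` of the `2 ^ h` leaves of that child, so if `2 ^ m * (h + 2) ≤ 2 ^ h`, each
side keeps `2 ^ m` unused leaves with which to extend the caterpillars of the other side, giving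
`2 ^ (m + 1)` label-disjoint `(h + 2)`-caterpillars. By induction on `m`, a balanced tree of
height `h` carries `2 ^ m` label-disjoint `(h + 1)`-caterpillars whenever
`2 ^ m * (h + 1) ≤ 2 ^ h`, and for `h = n - 1` this holds with `m = ⌊n - log₂ n - 1⌋`.
-/

@[simp]
theorem List.toFinset_append_singleton {α : Type*} [DecidableEq α] (L : List α) (y : α) :
    (L ++ [y]).toFinset = insert y L.toFinset := by
  ext; simp

theorem pairwise_disjoint_toFinset_append_singleton {α ι : Type*} [DecidableEq α]
    {L : ι → List α} (hL : Pairwise fun i j => Disjoint (L i).toFinset (L j).toFinset)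
    {y : ι → α} (hy : Function.Injective y) (hfresh : ∀ i j, y i ∉ L j) :
    Pairwise fun i j => Disjoint (L i ++ [y i]).toFinset (L j ++ [y j]).toFinset := by
  intro i j hij
  simp [Finset.disjoint_insert_left, Finset.disjoint_insert_right, (hy.ne hij).symm, hfresh,
    hL hij]

theorem Finset.exists_embedding_avoiding_lists {α ι : Type*} [DecidableEq α] [Fintype ι]
    (s : Finset α) (L : ι → List α) {n : ℕ} (hlen : ∀ i, (L i).length ≤ n)
    (hcard : Fintype.card ι * (n + 1) ≤ s.card) :
    ∃ y : ι ↪ α, ∀ i, y i ∈ s ∧ ∀ j, y i ∉ L j := by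
  set U := Finset.univ.biUnion fun j => (L j).toFinset
  have hU : U.card ≤ Fintype.card ι * n :=
    Finset.card_biUnion_le.trans <| (Finset.sum_le_sum fun j _ =>
      (List.toFinset_card_le (L j)).trans (hlen j)).trans (by simp)
  have hfree : Fintype.card ι ≤ Fintype.card (↥(s \ U)) := by
    have := Finset.le_card_sdiff U s
    rw [Fintype.card_coe]
    rw [mul_add_one] at hcard
    omega
  obtain ⟨e⟩ := Function.Embedding.nonempty_of_card_le hfree
  refine ⟨e.trans (Function.Embedding.subtype _), fun i => ?_⟩
  have hi := Finset.mem_sdiff.mp (e i).2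
  exact ⟨hi.1, fun j hj => hi.2 (Finset.mem_biUnion.mpr ⟨j, Finset.mem_univ j,
    List.mem_toFinset.mpr hj⟩)⟩

namespace PhyloMAST.PTree

variable {α : Type}

theorem length_leafList_le_two_pow_height (t : PTree α) : t.leafList.length ≤ 2 ^ t.height := by
  induction t with
  | leaf x => simp [leafList, height]
  | node l r ihl ihr =>
    have hl := Nat.pow_le_pow_right two_pos (le_max_left l.height r.height)
    have hr := Nat.pow_le_pow_right two_pos (le_max_right l.height r.height)
    simp only [leafList, height, List.length_append, pow_succ]
    omega

theorem balanced_node_iff {l r : PTree α} :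
    (node l r).Balanced ↔ l.Balanced ∧ r.Balanced ∧ l.height = r.height := by
  have hl := length_leafList_le_two_pow_height l
  have hr := length_leafList_le_two_pow_height r
  have hml := Nat.pow_le_pow_right two_pos (le_max_left l.height r.height)
  have hmr := Nat.pow_le_pow_right two_pos (le_max_right l.height r.height)
  simp only [Balanced, leafList, height, List.length_append, pow_succ]
  constructor
  · intro h
    have hl' : l.height = max l.height r.height := Nat.pow_right_injective le_rfl
      (show 2 ^ l.height = 2 ^ max l.height r.height by omega)
    have hr' : r.height = max l.height r.height := Nat.pow_right_injective le_rfl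
      (show 2 ^ r.height = 2 ^ max l.height r.height by omega)
    refine ⟨?_, ?_, hl'.trans hr'.symm⟩ <;> omega
  · rintro ⟨hl, hr, heq⟩
    rw [hl, hr, heq, max_self]
    ring

theorem catList_append_singleton [Inhabited α] {L : List α} (hL : L ≠ []) (y : α) :
    catList (L ++ [y]) = node (catList L) (leaf y) := by
  obtain ⟨x, xs, rfl⟩ := List.exists_cons_of_ne_nil hL
  simp [catList, List.foldl_append]

variable [DecidableEq α]

@[simp]
theorem leaves_leaf (x : α) : (leaf x).leaves = {x} := rfl

@[simp]
theorem leaves_node (l r : PTree α) : (node l r).leaves = l.leaves ∪ r.leaves := by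
  simp [leaves, leafList]

theorem leaves_nonempty (t : PTree α) : t.leaves.Nonempty := by
  induction t with
  | leaf x => simp
  | node l r ihl _ => simpa using ihl.mono Finset.subset_union_left

theorem phylo_node_iff {l r : PTree α} :
    (node l r).Phylo ↔ l.Phylo ∧ r.Phylo ∧ Disjoint l.leaves r.leaves := by
  simp only [Phylo, leafList, leaves, List.nodup_append, List.disjoint_toFinset_iff_disjoint,
    List.Disjoint]
  grind

theorem Phylo.card_leaves {t : PTree α} (ht : t.Phylo) : t.leaves.card = t.leafList.length :=
  List.toFinset_card_of_nodup ht

theorem Balanced.card_leaves {t : PTree α} (hb : t.Balanced) (ht : t.Phylo) :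
    t.leaves.card = 2 ^ t.height :=
  ht.card_leaves.trans hb

theorem restrict_congr {t : PTree α} {Y Z : Finset α} (h : ∀ x ∈ t.leaves, x ∈ Y ↔ x ∈ Z) :
    t.restrict Y = t.restrict Z := by
  induction t with
  | leaf x => simp [restrict, h x (by simp)]
  | node l r ihl ihr =>
    simp only [leaves_node, Finset.mem_union] at h
    simp only [restrict, ihl fun x hx => h x (.inl hx), ihr fun x hx => h x (.inr hx)]

theorem restrict_eq_none {t : PTree α} {Y : Finset α} (h : Disjoint t.leaves Y) :
    t.restrict Y = none := by
  induction t with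
  | leaf x => simpa [restrict] using h
  | node l r ihl ihr =>
    rw [leaves_node, Finset.disjoint_union_left] at h
    simp only [restrict, ihl h.1, ihr h.2]

theorem Phylo.restrict_singleton {t : PTree α} (ht : t.Phylo) {y : α} (hy : y ∈ t.leaves) :
    t.restrict {y} = some (leaf y) := by
  induction t with
  | leaf x => simp_all [restrict]
  | node l r ihl ihr =>
    obtain ⟨hl, hr, hlr⟩ := phylo_node_iff.mp ht
    rcases Finset.mem_union.mp (leaves_node l r ▸ hy) with hyl | hyr
    · have hnone := restrict_eq_none (Finset.disjoint_singleton_right.mpr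
        (Finset.disjoint_left.mp hlr hyl))
      simp only [restrict, ihl hl hyl, hnone]
    · have hnone := restrict_eq_none (Finset.disjoint_singleton_right.mpr
        (Finset.disjoint_right.mp hlr hyr))
      simp only [restrict, ihr hr hyr, hnone]

theorem restrict_insert_of_notMem {t : PTree α} {Y : Finset α} {y : α} (hy : y ∉ t.leaves) :
    t.restrict (insert y Y) = t.restrict Y :=
  restrict_congr fun x hx => by simp [Finset.mem_insert, ne_of_mem_of_not_mem hx hy]

theorem restrict_insert_of_disjoint {t : PTree α} {Y : Finset α} (y : α)
    (hY : Disjoint t.leaves Y) : t.restrict (insert y Y) = t.restrict {y} :=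
  restrict_congr fun x hx => by simp [Finset.disjoint_left.mp hY hx]

section Caterpillar

variable [Inhabited α]

theorem leaves_catList {L : List α} (hL : L ≠ []) : (catList L).leaves = L.toFinset := by
  induction L using List.reverseRecOn with
  | nil => exact absurd rfl hL
  | append_singleton xs y ih =>
    rcases eq_or_ne xs [] with rfl | hxs
    · rfl
    · rw [catList_append_singleton hxs, leaves_node, ih hxs, List.toFinset_append]
      rfl

def IsCaterpillar (t : PTree α) (n : ℕ) (L : List α) : Prop :=
  L.length = n ∧ L.Nodup ∧ Embeds t (catList L)

theorem IsCaterpillar.ne_nil {t : PTree α} {n : ℕ} {L : List α} (h : IsCaterpillar t n L)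
    (hn : 0 < n) : L ≠ [] := by
  rintro rfl
  exact hn.ne' h.1.symm

theorem IsCaterpillar.subset_leaves {t : PTree α} {n : ℕ} {L : List α}
    (h : IsCaterpillar t n L) (hn : 0 < n) : L.toFinset ⊆ t.leaves :=
  leaves_catList (h.ne_nil hn) ▸ h.2.2.1

theorem IsCaterpillar.notMem_of_notMem_leaves {t : PTree α} {n : ℕ} {L : List α}
    (h : IsCaterpillar t n L) (hn : 0 < n) {y : α} (hy : y ∉ t.leaves) : y ∉ L :=
  fun hyL => hy (h.subset_leaves hn (List.mem_toFinset.mpr hyL))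

theorem isCaterpillar_leaf (x : α) : IsCaterpillar (leaf x) 1 [x] :=
  ⟨rfl, List.nodup_singleton x, subset_rfl, leaf x, by simp [catList, restrict], .leaf x⟩

theorem IsCaterpillar.append_singleton {t : PTree α} {n : ℕ} {L : List α}
    (h : IsCaterpillar t n L) {y : α} (hy : y ∉ L) :
    (L ++ [y]).length = n + 1 ∧ (L ++ [y]).Nodup := by
  refine ⟨by simp [h.1], List.nodup_append.mpr ⟨h.2.1, List.nodup_singleton y, ?_⟩⟩
  rintro a ha b hb rfl
  exact hy (List.eq_of_mem_singleton hb ▸ ha)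

theorem IsCaterpillar.node_left {l r : PTree α} (hlr : Disjoint l.leaves r.leaves)
    (hr : r.Phylo) {n : ℕ} (hn : 0 < n) {L : List α} (h : IsCaterpillar l n L) {y : α}
    (hy : y ∈ r.leaves) : IsCaterpillar (node l r) (n + 1) (L ++ [y]) := by
  have hsub := h.subset_leaves hn
  have hyl : y ∉ l.leaves := Finset.disjoint_right.mp hlr hy
  have hyL : y ∉ L := h.notMem_of_notMem_leaves hn hyl
  obtain ⟨-, R, hR, hiso⟩ := h.2.2
  have hleaves : (catList (L ++ [y])).leaves = insert y L.toFinset := by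
    rw [leaves_catList (by simp), List.toFinset_append_singleton]
  rw [leaves_catList (h.ne_nil hn)] at hR
  refine ⟨(h.append_singleton hyL).1, (h.append_singleton hyL).2, ?_, node R (leaf y), ?_, ?_⟩
  · rw [hleaves, leaves_node, Finset.insert_subset_iff]
    exact ⟨Finset.mem_union_right _ hy, hsub.trans Finset.subset_union_left⟩
  · rw [hleaves, restrict, restrict_insert_of_notMem hyl, hR,
      restrict_insert_of_disjoint y (hlr.symm.mono_right hsub), hr.restrict_singleton hy]
  · rw [catList_append_singleton (h.ne_nil hn)]
    exact .node hiso (.leaf y)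

theorem IsCaterpillar.node_right {l r : PTree α} (hlr : Disjoint l.leaves r.leaves)
    (hl : l.Phylo) {n : ℕ} (hn : 0 < n) {L : List α} (h : IsCaterpillar r n L) {y : α}
    (hy : y ∈ l.leaves) : IsCaterpillar (node l r) (n + 1) (L ++ [y]) := by
  have hsub := h.subset_leaves hn
  have hyr : y ∉ r.leaves := Finset.disjoint_left.mp hlr hy
  have hyL : y ∉ L := h.notMem_of_notMem_leaves hn hyr
  obtain ⟨-, R, hR, hiso⟩ := h.2.2
  have hleaves : (catList (L ++ [y])).leaves = insert y L.toFinset := by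
    rw [leaves_catList (by simp), List.toFinset_append_singleton]
  rw [leaves_catList (h.ne_nil hn)] at hR
  refine ⟨(h.append_singleton hyL).1, (h.append_singleton hyL).2, ?_, node (leaf y) R, ?_, ?_⟩
  · rw [hleaves, leaves_node, Finset.insert_subset_iff]
    exact ⟨Finset.mem_union_left _ hy, hsub.trans Finset.subset_union_right⟩
  · rw [hleaves, restrict, restrict_insert_of_notMem hyr, hR,
      restrict_insert_of_disjoint y (hlr.mono_right hsub), hl.restrict_singleton hy]
  · rw [catList_append_singleton (h.ne_nil hn)]
    exact .swap (.leaf y) hiso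

theorem Phylo.exists_isCaterpillar {t : PTree α} (ht : t.Phylo) :
    ∃ L, IsCaterpillar t (t.height + 1) L := by
  induction t with
  | leaf x => exact ⟨[x], isCaterpillar_leaf x⟩
  | node l r ihl ihr =>
    obtain ⟨hl, hr, hlr⟩ := phylo_node_iff.mp ht
    rcases le_total r.height l.height with hrl | hlr'
    · obtain ⟨L, hL⟩ := ihl hl
      obtain ⟨y, hy⟩ := r.leaves_nonempty
      refine ⟨L ++ [y], ?_⟩
      simpa [height, hrl] using hL.node_left hlr hr (Nat.succ_pos _) hy
    · obtain ⟨L, hL⟩ := ihr hr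
      obtain ⟨y, hy⟩ := l.leaves_nonempty
      refine ⟨L ++ [y], ?_⟩
      simpa [height, hlr'] using hL.node_right hlr hl (Nat.succ_pos _) hy

def DisjointCaterpillars {ι : Type*} (t : PTree α) (n : ℕ) (L : ι → List α) : Prop :=
  (∀ i, IsCaterpillar t n (L i)) ∧ Pairwise fun i j => Disjoint (L i).toFinset (L j).toFinset

variable {ι κ : Type*}

theorem DisjointCaterpillars.comp {t : PTree α} {n : ℕ} {L : ι → List α}
    (h : DisjointCaterpillars t n L) {f : κ → ι} (hf : Function.Injective f) :
    DisjointCaterpillars t n (L ∘ f) :=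
  ⟨fun i => h.1 (f i), h.2.comp_of_injective hf⟩

theorem DisjointCaterpillars.sumElim {t : PTree α} {n : ℕ} {L₁ : ι → List α} {L₂ : κ → List α}
    (h₁ : DisjointCaterpillars t n L₁) (h₂ : DisjointCaterpillars t n L₂)
    (h : ∀ i j, Disjoint (L₁ i).toFinset (L₂ j).toFinset) :
    DisjointCaterpillars t n (Sum.elim L₁ L₂) := by
  refine ⟨Sum.rec h₁.1 h₂.1, ?_⟩
  rintro (i | i) (j | j) hij
  · exact h₁.2 fun hij' => hij (congrArg _ hij')
  · exact h i j
  · exact (h j i).symm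
  · exact h₂.2 fun hij' => hij (congrArg _ hij')

theorem DisjointCaterpillars.node {l r : PTree α} (hl : l.Phylo) (hr : r.Phylo)
    (hlr : Disjoint l.leaves r.leaves) {n : ℕ} (hn : 0 < n) {Ll Lr : ι → List α}
    (hLl : DisjointCaterpillars l n Ll) (hLr : DisjointCaterpillars r n Lr) {x y : ι → α}
    (hxinj : Function.Injective x) (hyinj : Function.Injective y)
    (hx : ∀ i, x i ∈ l.leaves ∧ ∀ j, x i ∉ Ll j) (hy : ∀ i, y i ∈ r.leaves ∧ ∀ j, y i ∉ Lr j) :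
    DisjointCaterpillars (node l r) (n + 1)
      (Sum.elim (fun i => Ll i ++ [y i]) (fun i => Lr i ++ [x i])) := by
  have hyl i : y i ∉ l.leaves := Finset.disjoint_right.mp hlr (hy i).1
  have hxr i : x i ∉ r.leaves := Finset.disjoint_left.mp hlr (hx i).1
  refine DisjointCaterpillars.sumElim
    ⟨fun i => (hLl.1 i).node_left hlr hr hn (hy i).1,
      pairwise_disjoint_toFinset_append_singleton hLl.2 hyinj fun i j =>
        (hLl.1 j).notMem_of_notMem_leaves hn (hyl i)⟩
    ⟨fun i => (hLr.1 i).node_right hlr hl hn (hx i).1,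
      pairwise_disjoint_toFinset_append_singleton hLr.2 hxinj fun i j =>
        (hLr.1 j).notMem_of_notMem_leaves hn (hxr i)⟩
    fun i j => ?_
  simp only [List.toFinset_append_singleton, Finset.disjoint_insert_left,
    Finset.disjoint_insert_right, Finset.mem_insert, List.mem_toFinset, not_or]
  exact ⟨⟨fun hxy => hyl i (hxy ▸ (hx j).1), (hx j).2 i⟩, (hy i).2 j,
    hlr.mono ((hLl.1 i).subset_leaves hn) ((hLr.1 j).subset_leaves hn)⟩

end Caterpillar

theorem Phylo.exists_disjointCaterpillars [Inhabited α] (m : ℕ) {t : PTree α} (ht : t.Phylo)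
    (hb : t.Balanced) (hm : 2 ^ m * (t.height + 1) ≤ 2 ^ t.height) :
    ∃ L : Fin (2 ^ m) → List α, DisjointCaterpillars t (t.height + 1) L := by
  induction m generalizing t with
  | zero =>
    obtain ⟨L, hL⟩ := ht.exists_isCaterpillar
    exact ⟨fun _ => L, fun _ => hL, fun i j hij =>
      (hij (Subsingleton.elim (α := Fin 1) i j)).elim⟩
  | succ m ih =>
    cases t with
    | leaf x => simp [height] at hm
    | node l r =>
      obtain ⟨hl, hr, hlr⟩ := phylo_node_iff.mp ht
      obtain ⟨hbl, hbr, hh⟩ := balanced_node_iff.mp hb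
      have hheight : (node l r).height = l.height + 1 := by simp [height, hh]
      rw [hheight] at hm ⊢
      have hm' : 2 ^ m * (l.height + 1 + 1) ≤ 2 ^ l.height := by
        rw [pow_succ, pow_succ] at hm
        linarith
      have hm'' : 2 ^ m * (l.height + 1) ≤ 2 ^ l.height :=
        (Nat.mul_le_mul_left _ (Nat.le_succ _)).trans hm'
      obtain ⟨Ll, hLl⟩ := ih hl hbl hm''
      obtain ⟨Lr, hLr⟩ := ih hr hbr (hh ▸ hm'')
      rw [← hh] at hLr
      obtain ⟨x, hx⟩ := l.leaves.exists_embedding_avoiding_lists Ll (fun i => (hLl.1 i).1.le)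
        (by rwa [Fintype.card_fin, hbl.card_leaves hl])
      obtain ⟨y, hy⟩ := r.leaves.exists_embedding_avoiding_lists Lr (fun i => (hLr.1 i).1.le)
        (by rwa [Fintype.card_fin, hbr.card_leaves hr, ← hh])
      rw [pow_succ, mul_two]
      exact ⟨_, (DisjointCaterpillars.node hl hr hlr (Nat.succ_pos _) hLl hLr x.injective
        y.injective hx hy).comp finSumFinEquiv.symm.injective⟩

end PhyloMAST.PTree

theorem two_pow_floor_mul_le {n : ℕ} (hn : 0 < n) :
    2 ^ ⌊(n : ℝ) - Real.logb 2 n - 1⌋₊ * n ≤ 2 ^ (n - 1) := by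
  set m := ⌊(n : ℝ) - Real.logb 2 n - 1⌋₊
  have hn' : (0 : ℝ) < n := by exact_mod_cast hn
  have hcast : ((n - 1 : ℕ) : ℝ) = n - 1 := by rw [Nat.cast_sub hn, Nat.cast_one]
  have hlog : Real.logb 2 n ≤ n - 1 := by
    rw [Real.logb_le_iff_le_rpow one_lt_two hn', ← hcast, Real.rpow_natCast]
    have : n - 1 < 2 ^ (n - 1) := Nat.lt_two_pow_self
    exact_mod_cast (by omega : n ≤ 2 ^ (n - 1))
  have hm : (m : ℝ) + Real.logb 2 n ≤ (n - 1 : ℕ) := by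
    have := Nat.floor_le (show 0 ≤ (n : ℝ) - Real.logb 2 n - 1 by linarith)
    rw [hcast]
    linarith
  have key : (2 : ℝ) ^ m * n ≤ 2 ^ (n - 1) := calc
    (2 : ℝ) ^ m * n = 2 ^ ((m : ℝ) + Real.logb 2 n) := by
      rw [Real.rpow_add two_pos, Real.rpow_natCast, Real.rpow_logb two_pos (by norm_num) hn']
    _ ≤ 2 ^ ((n - 1 : ℕ) : ℝ) := Real.rpow_le_rpow_of_exponent_le one_le_two hm
    _ = 2 ^ (n - 1) := Real.rpow_natCast 2 (n - 1)
  exact_mod_cast key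

open PhyloMAST PTree

/-- Every balanced rooted binary phylogenetic tree on
`2 ^ (n - 1)` leaves embeds `2 ^ ⌊n - log₂ n - 1⌋` label-disjoint
`n`-caterpillars. -/
theorem balanced_embeds_disjoint_caterpillars {α : Type} [DecidableEq α] [Inhabited α]
    (n : ℕ) (hn : 0 < n) (T : PTree α)
    (hT : Phylo T) (hb : Balanced T) (hcard : T.leaves.card = 2 ^ (n - 1)) :
    ∃ L : Fin (2 ^ ⌊(n : ℝ) - Real.logb 2 n - 1⌋₊) → List α,
      (∀ i, (L i).length = n ∧ (L i).Nodup ∧ Embeds T (catList (L i))) ∧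
      (∀ i j, i ≠ j → Disjoint (L i).toFinset (L j).toFinset) := by
  have hheight : T.height = n - 1 :=
    Nat.pow_right_injective le_rfl ((hb.card_leaves hT).symm.trans hcard)
  have hn1 : n - 1 + 1 = n := Nat.sub_add_cancel hn
  obtain ⟨L, hL, hdisj⟩ := hT.exists_disjointCaterpillars _ hb
    (by rw [hheight, hn1]; exact two_pow_floor_mul_le hn)
  rw [hheight, hn1] at hL
  exact ⟨L, hL, fun i j hij => hdisj hij⟩
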